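/- Let D be a digraph and X, Y vertex sets with X joinable to Y. Suppose X' ⊆ X with X\X' finite, Y' ⊆ Y, and X' is joinable to Y'. Then there is a set Y'' ⊆ Y such that X is joinable to Y'' and |Y''\Y'| ≤ |X\X'|. -/

import Mathlib

/-!  Common framework: digraphs as edge sets on a vertex type, directed paths,
path-systems, separations, flames and largeness. -/

universe u

variable {V : Type u}

/-- A directed path in the digraph on `V` with edge set `E`, given by its
(nonempty, repetition-free) list of vertices `start :: rest`. -/
structure Dipath (E : Set (V × V)) : Type u where
  start : V
  rest : List V
  chain : List.Chain (fun a b => (a, b) ∈ E) start rest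
  nodup : (start :: rest).Nodup

namespace Dipath

variable {E : Set (V × V)}

/-- The list of vertices of the path. -/
def verts (p : Dipath E) : List V := p.start :: p.rest

/-- The terminal vertex of the path. -/
def last (p : Dipath E) : V := (p.start :: p.rest).getLast (List.cons_ne_nil _ _)

/-- The set of vertices of the path. -/
def support (p : Dipath E) : Set V := {v | v ∈ p.verts}

/-- The internal vertices of the path (all vertices except the first and the last). -/
def internal (p : Dipath E) : Set V := {v | v ∈ p.rest.dropLast}

/-- The list of (directed) edges of the path. -/
def edges (p : Dipath E) : List (V × V) := p.verts.zip p.rest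

/-- The set of edges of the path. -/
def edgeSet (p : Dipath E) : Set (V × V) := {e | e ∈ p.edges}

/-- The last edge of the path, if the path has at least one edge. -/
def lastEdge? (p : Dipath E) : Option (V × V) := p.edges.getLast?

end Dipath

section Defs

variable (E : Set (V × V))

/-- The set of ingoing edges of `v`. -/
def inEdges (v : V) : Set (V × V) := {e ∈ E | e.2 = v}

/-- The set of initial vertices of a set of paths. -/
def initVerts {E : Set (V × V)} (P : Set (Dipath E)) : Set V := Dipath.start '' P

/-- The set of terminal vertices of a set of paths. -/
def termVerts {E : Set (V × V)} (P : Set (Dipath E)) : Set V := Dipath.last '' P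

/-- The set of terminal edges of a set of paths. -/
def termEdges {E : Set (V × V)} (P : Set (Dipath E)) : Set (V × V) :=
  {e | ∃ p ∈ P, p.lastEdge? = some e}

/-- An `(r,v)`-path-system: a set of pairwise internally disjoint directed
paths from `r` to `v`. -/
def IsRVSystem (r v : V) (P : Set (Dipath E)) : Prop :=
  (∀ p ∈ P, p.start = r ∧ p.last = v) ∧
    P.Pairwise fun p q => p.support ∩ q.support ⊆ {r, v}

/-- An `(r,v)`-separation: a set of vertices avoiding `r` and `v` and meeting
every directed path from `r` to `v`. -/
def IsSeparation (r v : V) (S : Set V) : Prop :=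
  r ∉ S ∧ v ∉ S ∧ ∀ p : Dipath E, p.start = r → p.last = v → (p.support ∩ S).Nonempty

/-- A set of paths `P` and a vertex set `S` are orthogonal:  every path of `P`
meets `S` in exactly one vertex and every vertex of `S` lies on a path of `P`. -/
def Orthogonal {E : Set (V × V)} (P : Set (Dipath E)) (S : Set V) : Prop :=
  (∀ p ∈ P, ∃! x, x ∈ p.support ∩ S) ∧ ∀ x ∈ S, ∃ p ∈ P, x ∈ p.support

/-- An Erdős–Menger `(r,v)`-path-system: one orthogonal to some `(r,v)`-separation. -/
def IsEMSystem (r v : V) (P : Set (Dipath E)) : Prop :=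
  IsRVSystem E r v P ∧ ∃ S, IsSeparation E r v S ∧ Orthogonal P S

/-- An Erdős–Menger `(r,v)`-separation: one orthogonal to some `(r,v)`-path-system. -/
def IsEMSeparation (r v : V) (S : Set V) : Prop :=
  IsSeparation E r v S ∧ ∃ P : Set (Dipath E), IsRVSystem E r v P ∧ Orthogonal P S

/-- `𝒢_E(v)` (with root `r`): the collection of edge sets `I` that arise as the set of
terminal edges of an internally disjoint `(r,v)`-path-system in `E`. -/
def GSet (r v : V) : Set (Set (V × V)) :=
  {I | ∃ P : Set (Dipath E), IsRVSystem E r v P ∧ termEdges P = I}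

/-- A vertex-flame (with root `r`): for every `v ≠ r`, the whole in-edge set of `v`
is the terminal edge set of an internally disjoint `(r,v)`-path-system. -/
def IsFlame (r : V) : Prop := ∀ v, v ≠ r → inEdges E v ∈ GSet E r v

/-- `L` is `v`-large with respect to the digraph `E` rooted at `r`: `L` contains `rv`
whenever `E` does, and some Erdős–Menger `(r,v)`-path-system of `E - rv` lies in `L`. -/
def VLarge (r : V) (L : Set (V × V)) (v : V) : Prop :=
  ((r, v) ∈ E → (r, v) ∈ L) ∧
    ∃ P : Set (Dipath (E \ {(r, v)})),
      IsEMSystem (E \ {(r, v)}) r v P ∧ ∀ p ∈ P, p.edgeSet ⊆ L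

/-- `L` is large with respect to the digraph `E` rooted at `r`. -/
def Large (r : V) (L : Set (V × V)) : Prop := ∀ v, v ≠ r → VLarge E r L v

/-- An `(X,Y)`-path: from `X` to `Y`, internally disjoint from `X ∪ Y`. -/
def IsXYPath (X Y : Set V) (p : Dipath E) : Prop :=
  p.start ∈ X ∧ p.last ∈ Y ∧ ∀ w ∈ p.internal, w ∉ X ∪ Y

/-- An `(X,Y)`-path-system: pairwise disjoint `(X,Y)`-paths. -/
def IsXYSystem (X Y : Set V) (P : Set (Dipath E)) : Prop :=
  (∀ p ∈ P, IsXYPath E X Y p) ∧ P.Pairwise fun p q => Disjoint p.support q.support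

/-- `X` is joinable to `Y`: some `(X,Y)`-path-system covers `X` with its initial vertices. -/
def Joinable (X Y : Set V) : Prop :=
  ∃ P : Set (Dipath E), IsXYSystem E X Y P ∧ initVerts P = X

/-- `X` is incompressible to `Y`: `X` is joinable to `Y` and every witnessing
path-system covers `Y` with its terminal vertices. -/
def Incompressible (X Y : Set V) : Prop :=
  Joinable E X Y ∧
    ∀ P : Set (Dipath E), IsXYSystem E X Y P → initVerts P = X → termVerts P = Y

/-- An `(X,Y)`-separation: a vertex set meeting every `(X,Y)`-path. -/
def IsXYSeparation (X Y : Set V) (S : Set V) : Prop :=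
  ∀ p : Dipath E, IsXYPath E X Y p → (p.support ∩ S).Nonempty

/-- An Erdős–Menger `(X,Y)`-separation: one orthogonal to some `(X,Y)`-path-system. -/
def IsEMXYSeparation (X Y : Set V) (S : Set V) : Prop :=
  IsXYSeparation E X Y S ∧ ∃ P : Set (Dipath E), IsXYSystem E X Y P ∧ Orthogonal P S

/-- `X'` is `(X,Y)`-finitely extendable: every `O` with `X' ⊆ O ⊆ X` and `O \ X'`
finite is joinable to `Y`. -/
def FinExtendable (X Y X' : Set V) : Prop :=
  X' ⊆ X ∧ ∀ O, X' ⊆ O → O ⊆ X → (O \ X').Finite → Joinable E O Y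

/-- `S` separates the vertex `y` from `r`:  every directed path from `r` to `y` meets `S`. -/
def SeparatesFrom (r : V) (S : Set V) (y : V) : Prop :=
  ∀ p : Dipath E, p.start = r → p.last = y → (p.support ∩ S).Nonempty

/-- An `(X,y)`-path: from a vertex of `X` to `y`, internally disjoint from `X`. -/
def IsXyPath (X : Set V) (y : V) (p : Dipath E) : Prop :=
  p.start ∈ X ∧ p.last = y ∧ ∀ w ∈ p.internal, w ∉ X

/-- An `(X,y)`-path-system: `(X,y)`-paths, pairwise disjoint except possibly at `y`. -/
def IsXySystem (X : Set V) (y : V) (P : Set (Dipath E)) : Prop :=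
  (∀ p ∈ P, IsXyPath E X y p) ∧ P.Pairwise fun p q => p.support ∩ q.support ⊆ {y}

/-- An `(r,S)`-path: from `r` to a vertex of `S`, internally disjoint from `S`. -/
def IsRSPath (r : V) (S : Set V) (p : Dipath E) : Prop :=
  p.start = r ∧ p.last ∈ S ∧ ∀ w ∈ p.internal, w ∉ S

/-- An `(r,S)`-path-system: `(r,S)`-paths, pairwise disjoint apart from `r`. -/
def IsRSSystem (r : V) (S : Set V) (P : Set (Dipath E)) : Prop :=
  (∀ p ∈ P, IsRSPath E r S p) ∧ P.Pairwise fun p q => p.support ∩ q.support ⊆ {r}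

/-- `E` is a `G`-quasi-flame (with root `r`): for every `v ≠ r`, every set `I` of
ingoing edges of `v` with `I \ inEdges G v` finite lies in `𝒢_E(v)`. -/
def QuasiFlame (r : V) (G : Set (V × V)) : Prop :=
  ∀ v, v ≠ r → ∀ I, I ⊆ inEdges E v → (I \ inEdges G v).Finite → I ∈ GSet E r v

/-- The local connectivity `κ_E(r,v)`: the maximum size of an internally disjoint
`(r,v)`-path-system. -/
noncomputable def kappa (r v : V) : ℕ :=
  sSup {n | ∃ P : Set (Dipath E), IsRVSystem E r v P ∧ P.Finite ∧ P.ncard = n}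

end Defs

/-!
Induction on `X \ X'` reduces the claim to adding one vertex `x ∈ X \ X'`: given linkages `a` of
`X` to `Y` and `b` of `X'` to `W`, the set `insert x X'` is joinable to `insert y W` for some
`y ∈ Y`. For this we run an augmenting process. The vertex in debt, initially `x`, follows its
`a`-path until it first meets the part of some `b`-path still in use, takes over the rest of that
`b`-path, and the vertex previously routed through it becomes the new debtor. If the `a`-path of a
debtor meets no such part, the debtor is routed along it to its end `y` and the process stops.
Otherwise the process runs forever; but each time a vertex is in debt its junction moves strictly
further along its own `a`-path, so every vertex is in debt only finitely often, its route
stabilises, and the limiting routes link `insert x X'` to `W`.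
-/

namespace Dipath

variable {E : Set (V × V)}

theorem verts_ne_nil (p : Dipath E) : p.verts ≠ [] := List.cons_ne_nil _ _

theorem length_verts_pos (p : Dipath E) : 0 < p.verts.length :=
  List.length_pos_of_ne_nil p.verts_ne_nil

theorem getLast_verts (p : Dipath E) : p.verts.getLast p.verts_ne_nil = p.last := rfl

theorem getLast?_verts (p : Dipath E) : p.verts.getLast? = some p.last := by
  rw [List.getLast?_eq_some_getLast p.verts_ne_nil, getLast_verts]

theorem last_eq_getElem (p : Dipath E) :
    p.last = p.verts[p.verts.length - 1]'(Nat.sub_lt p.length_verts_pos one_pos) := by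
  rw [← getLast_verts, List.getLast_eq_getElem]

theorem isChain_verts (p : Dipath E) : p.verts.IsChain (fun a b => (a, b) ∈ E) := p.chain

theorem edge_mem (p : Dipath E) {k : ℕ} (h : k + 1 < p.verts.length) :
    (p.verts[k], p.verts[k + 1]) ∈ E :=
  List.isChain_iff_getElem.mp p.isChain_verts k h

theorem mem_internal_iff (p : Dipath E) {v : V} :
    v ∈ p.internal ↔ ∃ k, ∃ h : k + 1 < p.verts.length, 0 < k ∧ p.verts[k] = v := by
  simp only [internal, Set.mem_ofPred_eq, List.mem_iff_getElem, List.length_dropLast,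
    List.getElem_dropLast, verts, List.length_cons]
  constructor
  · rintro ⟨t, ht, rfl⟩
    exact ⟨t + 1, by omega, by omega, rfl⟩
  · rintro ⟨k, hk, hk0, rfl⟩
    obtain ⟨t, rfl⟩ : ∃ t, k = t + 1 := ⟨k - 1, by omega⟩
    exact ⟨t, by omega, rfl⟩

section SourcesAndSinks

variable {X Y : Set V}

theorem eq_zero_of_getElem_mem (hX : ∀ e ∈ E, e.2 ∉ X) (p : Dipath E) {k : ℕ}
    (hk : k < p.verts.length) (hmem : p.verts[k] ∈ X) : k = 0 := by
  obtain _ | k := k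
  · rfl
  · exact absurd hmem (hX _ (p.edge_mem hk))

theorem eq_length_sub_one_of_getElem_mem (hY : ∀ e ∈ E, e.1 ∉ Y) (p : Dipath E) {k : ℕ}
    (hk : k < p.verts.length) (hmem : p.verts[k] ∈ Y) : k = p.verts.length - 1 := by
  by_contra h
  exact hY _ (p.edge_mem (k := k) (by omega)) hmem

theorem notMem_of_mem_internal (hX : ∀ e ∈ E, e.2 ∉ X) (hY : ∀ e ∈ E, e.1 ∉ Y)
    (p : Dipath E) {v : V} (hv : v ∈ p.internal) : v ∉ X ∪ Y := by
  obtain ⟨k, hk, hk0, rfl⟩ := p.mem_internal_iff.mp hv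
  rintro (hmem | hmem)
  · exact hk0.ne' (p.eq_zero_of_getElem_mem hX _ hmem)
  · have := p.eq_length_sub_one_of_getElem_mem hY _ hmem
    omega

end SourcesAndSinks

open Classical in
/-- The path following `p` up to index `i` and then `q` after index `j`, where `p.verts[i]` and
`q.verts[j]` should coincide; it is junk (`p`) when this concatenation is not a path. -/
noncomputable def splice (p q : Dipath E) (i j : ℕ) : Dipath E :=
  if h : (p.start :: (p.rest.take i ++ q.verts.drop (j + 1))).IsChain (fun a b => (a, b) ∈ E) ∧
      (p.start :: (p.rest.take i ++ q.verts.drop (j + 1))).Nodup then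
    ⟨p.start, p.rest.take i ++ q.verts.drop (j + 1), h.1, h.2⟩
  else p

theorem splice_start (p q : Dipath E) (i j : ℕ) : (p.splice q i j).start = p.start := by
  unfold splice; split <;> rfl

variable {p q : Dipath E} {i j : ℕ}

theorem verts_splice (hi : i < p.verts.length) (hj : j < q.verts.length)
    (hij : p.verts[i] = q.verts[j])
    (hdisj : (p.verts.take (i + 1)).Disjoint (q.verts.drop (j + 1))) :
    (p.splice q i j).verts = p.verts.take (i + 1) ++ q.verts.drop (j + 1) := by
  have hchain : (p.verts.take (i + 1) ++ q.verts.drop (j + 1)).IsChain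
      (fun a b => (a, b) ∈ E) := by
    refine (p.isChain_verts.take _).append (q.isChain_verts.drop _) ?_
    intro a ha b hb
    rw [List.getLast?_take, if_neg (by omega), Nat.add_sub_cancel,
      List.getElem?_eq_getElem hi] at ha
    rw [List.head?_drop] at hb
    obtain ⟨rfl⟩ := Option.mem_some_iff.mp ha
    by_cases hlt : j + 1 < q.verts.length
    · rw [List.getElem?_eq_getElem hlt] at hb
      obtain ⟨rfl⟩ := Option.mem_some_iff.mp hb
      rw [hij]
      exact q.edge_mem hlt
    · simp [List.getElem?_eq_none (by omega : q.verts.length ≤ j + 1)] at hb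
  have hnodup : (p.verts.take (i + 1) ++ q.verts.drop (j + 1)).Nodup :=
    List.nodup_append.mpr ⟨(List.take_sublist _ _).nodup p.nodup,
      (List.drop_sublist _ _).nodup q.nodup, fun a ha b hb hab => hdisj ha (hab ▸ hb)⟩
  have htake : p.verts.take (i + 1) = p.start :: p.rest.take i := List.take_succ_cons
  rw [htake] at hchain hnodup ⊢
  unfold splice
  rw [dif_pos ⟨hchain, hnodup⟩]
  rfl

theorem splice_last (hi : i < p.verts.length) (hj : j < q.verts.length)
    (hij : p.verts[i] = q.verts[j])
    (hdisj : (p.verts.take (i + 1)).Disjoint (q.verts.drop (j + 1))) :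
    (p.splice q i j).last = q.last := by
  have h := (p.splice q i j).getLast?_verts
  rw [verts_splice hi hj hij hdisj, List.getLast?_append, List.getLast?_drop] at h
  by_cases hc : j + 1 < q.verts.length
  · rw [if_neg (by omega), q.getLast?_verts] at h
    exact (Option.some_injective _ h).symm
  · rw [if_pos (by omega), Option.none_or, List.getLast?_take, if_neg (by omega),
      Nat.add_sub_cancel, List.getElem?_eq_getElem hi, hij] at h
    rw [q.last_eq_getElem, ← Option.some_inj, ← h]
    simp only [Option.some_or, Option.some_inj]
    congr 1
    omega

def single (v : V) : Dipath E :=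
  ⟨v, [], List.isChain_singleton v, List.nodup_singleton v⟩

end Dipath

theorem Joinable.exists_linkage {E : Set (V × V)} {O T : Set V} (h : Joinable E O T) :
    ∃ f : V → Dipath E, (∀ z ∈ O, (f z).start = z) ∧ (∀ z ∈ O, (f z).last ∈ T) ∧
      O.Pairwise fun z z' => (f z).verts.Disjoint (f z').verts := by
  classical
  obtain ⟨P, ⟨hPpath, hPdisj⟩, rfl⟩ := h
  let f : V → Dipath E := fun z => if h : ∃ p ∈ P, p.start = z then h.choose else .single z
  have hf : ∀ z ∈ initVerts P, f z ∈ P ∧ (f z).start = z := fun z hz => by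
    have hz : ∃ p ∈ P, p.start = z := hz
    simpa only [f, dif_pos hz] using hz.choose_spec
  refine ⟨f, fun z hz => (hf z hz).2, fun z hz => (hPpath _ (hf z hz).1).2.1,
    fun z hz z' hz' hne v hv hv' => ?_⟩
  have hff : f z ≠ f z' := fun h => hne (by rw [← (hf z hz).2, h, (hf z' hz').2])
  exact Set.disjoint_left.mp (hPdisj (hf z hz).1 (hf z' hz').1 hff) hv hv'

theorem joinable_of_linkage {E : Set (V × V)} {X Y O T : Set V} (hX : ∀ e ∈ E, e.2 ∉ X)
    (hY : ∀ e ∈ E, e.1 ∉ Y) (hO : O ⊆ X) (hT : T ⊆ Y) (f : V → Dipath E)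
    (hstart : ∀ z ∈ O, (f z).start = z) (hlast : ∀ z ∈ O, (f z).last ∈ T)
    (hdisj : O.Pairwise fun z z' => (f z).verts.Disjoint (f z').verts) : Joinable E O T := by
  refine ⟨f '' O, ⟨?_, ?_⟩, Set.LeftInvOn.image_image hstart⟩
  · rintro _ ⟨z, hz, rfl⟩
    exact ⟨(hstart z hz).symm ▸ hz, hlast z hz, fun w hw hmem =>
      (f z).notMem_of_mem_internal hX hY hw (Set.union_subset_union hO hT hmem)⟩
  · rintro _ ⟨z, hz, rfl⟩ _ ⟨z', hz', rfl⟩ hne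
    exact Set.disjoint_left.mpr fun _ hv hv' => hdisj hz hz' (fun h => hne (h ▸ rfl)) hv hv'

theorem Monotone.exists_forall_ge_eq_of_le {f : ℕ → ℕ} (hf : Monotone f) {B : ℕ}
    (hB : ∀ m, f m ≤ B) : ∃ N, ∀ m, N ≤ m → f m = f N := by
  have hbdd : BddAbove (Set.range f) := ⟨B, by rintro _ ⟨m, rfl⟩; exact hB m⟩
  obtain ⟨N, hN⟩ := Nat.sSup_mem (Set.range_nonempty f) hbdd
  exact ⟨N, fun m hm => le_antisymm (hN ▸ le_csSup hbdd ⟨m, rfl⟩) (hf hm)⟩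

structure AugSetting (E : Set (V × V)) (X Y X' W : Set V) (x : V) (a b : V → Dipath E) :
    Prop where
  noIn : ∀ e ∈ E, e.2 ∉ X
  noOut : ∀ e ∈ E, e.1 ∉ Y
  subset : X' ⊆ X
  target_subset : W ⊆ Y
  mem : x ∈ X
  notMem : x ∉ X'
  a_start : ∀ z ∈ X, (a z).start = z
  a_last : ∀ z ∈ X, (a z).last ∈ Y
  a_disjoint : X.Pairwise fun z z' => (a z).verts.Disjoint (a z').verts
  b_start : ∀ q ∈ X', (b q).start = q
  b_last : ∀ q ∈ X', (b q).last ∈ W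
  b_disjoint : X'.Pairwise fun q q' => (b q).verts.Disjoint (b q').verts

theorem AugSetting.insert_subset {E : Set (V × V)} {X Y X' W : Set V} {x : V}
    {a b : V → Dipath E} (H : AugSetting E X Y X' W x a b) : insert x X' ⊆ X :=
  Set.insert_subset H.mem H.subset

/-- A state of the augmentation process. `own z = some (i, j, q)` means that `z` is routed along
`a z` up to its vertex `i`, which is the vertex `j` of `b q`, and then along `b q`; the part of
`b q` from index `cut q` on is in use. `ptr z` is one more than the last junction index of `z`,
`debt` is the vertex waiting for a new route and `exh` the one routed along its whole `a`-path. -/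
structure AugState (V : Type u) where
  own : V → Option (ℕ × ℕ × V)
  cut : V → ℕ
  ptr : V → ℕ
  debt : Option V
  exh : Option V

namespace AugState

variable {E : Set (V × V)} (a b : V → Dipath E) (X' : Set V)

def liveSet (σ : AugState V) : Set V :=
  {v | ∃ q ∈ X', ∃ k, ∃ _ : k < (b q).verts.length, σ.cut q ≤ k ∧ (b q).verts[k] = v}

def Claimed (σ : AugState V) (q : V) : Prop := ∃ z i j, σ.own z = some (i, j, q)

def init (x : V) : AugState V := ⟨fun _ => none, fun _ => 0, fun _ => 0, some x, none⟩

def finish (σ : AugState V) (z : V) : AugState V := { σ with debt := none, exh := some z }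

open Classical in
noncomputable def steal (σ : AugState V) (z : V) (i j : ℕ) (q d : V) : AugState V :=
  ⟨Function.update (Function.update σ.own d none) z (some (i, j, q)),
    Function.update σ.cut q j, Function.update σ.ptr z (i + 1), some d, none⟩

/-- `d` is the vertex currently routed through `b q`, or `q` itself if `b q` is unclaimed; it
becomes the next debtor. -/
structure IsSteal (σ : AugState V) (z : V) (i j : ℕ) (q d : V) : Prop where
  debt_eq : σ.debt = some z
  lt_a : i < (a z).verts.length
  mem : q ∈ X'
  lt_b : j < (b q).verts.length
  cut_le : σ.cut q ≤ j
  getElem_eq : (a z).verts[i] = (b q).verts[j]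
  not_live_of_lt : ∀ k < i, ∀ _ : k < (a z).verts.length, (a z).verts[k] ∉ σ.liveSet b X'
  next : (∃ i₀ j₀, σ.own d = some (i₀, j₀, q)) ∨ (¬ σ.Claimed q ∧ d = q)

inductive Step : AugState V → AugState V → Prop
  | idle (σ : AugState V) (h : σ.debt = none) : Step σ σ
  | finish (σ : AugState V) (z : V) (h : σ.debt = some z)
      (hclean : ∀ k, ∀ _ : k < (a z).verts.length, (a z).verts[k] ∉ σ.liveSet b X') :
      Step σ (σ.finish z)
  | steal (σ : AugState V) (z : V) (i j : ℕ) (q d : V) (h : IsSteal a b X' σ z i j q d) :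
      Step σ (σ.steal z i j q d)

structure Inv (x : V) (σ : AugState V) : Prop where
  own_spec : ∀ z i j q, σ.own z = some (i, j, q) →
    q ∈ X' ∧ z ∈ insert x X' ∧
      ∃ (hi : i < (a z).verts.length) (hj : j < (b q).verts.length),
        1 ≤ j ∧ (a z).verts[i] = (b q).verts[j] ∧ σ.cut q = j ∧ σ.ptr z = i + 1
  own_inj : ∀ z z' i j i' j' q, σ.own z = some (i, j, q) → σ.own z' = some (i', j', q) →
    z = z'
  cut_eq_zero : ∀ q, ¬ σ.Claimed q → σ.cut q = 0
  own_clean : ∀ z i j q, σ.own z = some (i, j, q) →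
    ∀ k < i, ∀ _ : k < (a z).verts.length, (a z).verts[k] ∉ σ.liveSet b X'
  ptr_clean : ∀ z, σ.own z = none →
    ∀ k < σ.ptr z, ∀ _ : k < (a z).verts.length, (a z).verts[k] ∉ σ.liveSet b X'
  debt_spec : ∀ z, σ.debt = some z →
    σ.own z = none ∧ z ∈ insert x X' ∧ σ.exh = none ∧ (z = x ∨ σ.Claimed z)
  exh_spec : ∀ z, σ.exh = some z →
    σ.debt = none ∧ σ.own z = none ∧ z ∈ insert x X' ∧
      (∀ k, ∀ _ : k < (a z).verts.length, (a z).verts[k] ∉ σ.liveSet b X') ∧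
      (z = x ∨ σ.Claimed z)
  active : ∀ z, σ.own z ≠ none → z = x ∨ σ.Claimed z
  cover : ∀ z ∈ insert x X', σ.own z ≠ none ∨ σ.exh = some z ∨ σ.debt = some z ∨
    (z ∈ X' ∧ ¬ σ.Claimed z)
  ptr_le : ∀ z, σ.ptr z ≤ (a z).verts.length

open Classical in
noncomputable def route (σ : AugState V) (z : V) : Dipath E :=
  match σ.own z with
  | some (i, j, q) => (a z).splice (b q) i j
  | none => if σ.exh = some z then a z else b z

/-- The vertex `q` such that the route of `z` ends along `b q`. -/
def partner (σ : AugState V) (z : V) : V :=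
  match σ.own z with
  | some (_, _, q) => q
  | none => z

variable {a b X'} {x : V} {σ σ' : AugState V}

theorem inv_init : Inv a b X' x (init x) := by
  refine ⟨?_, ?_, ?_, ?_, ?_, ?_, ?_, ?_, ?_, ?_⟩ <;> simp [init, Claimed]
  exact fun z hz => Or.inr hz

theorem mem_liveSet {q : V} (hq : q ∈ X') {k : ℕ} (hk : k < (b q).verts.length)
    (hc : σ.cut q ≤ k) : (b q).verts[k] ∈ σ.liveSet b X' := ⟨q, hq, k, hk, hc, rfl⟩

@[simp] theorem finish_debt (z : V) : (σ.finish z).debt = none := rfl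

@[simp] theorem finish_exh (z : V) : (σ.finish z).exh = some z := rfl

section Steal

open Classical

variable {z w d q : V} {i j : ℕ}

@[simp] theorem steal_own_self : (σ.steal z i j q d).own z = some (i, j, q) := by
  simp only [steal, Function.update_self]

theorem steal_own_of_ne (hz : w ≠ z) (hd : w ≠ d) : (σ.steal z i j q d).own w = σ.own w := by
  simp only [steal, Function.update_of_ne hz, Function.update_of_ne hd]

theorem steal_own_next (hz : d ≠ z) : (σ.steal z i j q d).own d = none := by
  simp only [steal, Function.update_of_ne hz, Function.update_self]

@[simp] theorem steal_cut_self : (σ.steal z i j q d).cut q = j := by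
  simp only [steal, Function.update_self]

theorem steal_cut_of_ne (h : w ≠ q) : (σ.steal z i j q d).cut w = σ.cut w := by
  simp only [steal, Function.update_of_ne h]

@[simp] theorem steal_ptr_self : (σ.steal z i j q d).ptr z = i + 1 := by
  simp only [steal, Function.update_self]

theorem steal_ptr_of_ne (h : w ≠ z) : (σ.steal z i j q d).ptr w = σ.ptr w := by
  simp only [steal, Function.update_of_ne h]

@[simp] theorem steal_debt : (σ.steal z i j q d).debt = some d := rfl

@[simp] theorem steal_exh : (σ.steal z i j q d).exh = none := rfl

end Steal

variable {X Y W : Set V}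

theorem getElem_notMem_liveSet (hb : X'.Pairwise fun q q' => (b q).verts.Disjoint (b q').verts)
    {q : V} (hq : q ∈ X') {k : ℕ} (hk : k < (b q).verts.length) (hcut : k < σ.cut q) :
    (b q).verts[k] ∉ σ.liveSet b X' := by
  rintro ⟨q', hq', k', hk', hc', he⟩
  obtain rfl : q' = q := by
    by_contra hne
    exact hb hq' hq hne (he ▸ List.getElem_mem _) (List.getElem_mem _)
  obtain rfl : k' = k := (b q').nodup.getElem_inj_iff.mp he
  omega

theorem Inv.own_eq_none_of_not_claimed (H : AugSetting E X Y X' W x a b)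
    (hinv : Inv a b X' x σ) {q : V} (hq : q ∈ X') (hnc : ¬ σ.Claimed q) : σ.own q = none := by
  by_contra hne
  obtain rfl | hc := hinv.active q hne
  · exact H.notMem hq
  · exact hnc hc

namespace IsSteal

variable {z d q : V} {i j : ℕ}

theorem debtor_spec (hinv : Inv a b X' x σ) (hs : IsSteal a b X' σ z i j q d) :
    σ.own z = none ∧ z ∈ insert x X' ∧ σ.exh = none ∧ (z = x ∨ σ.Claimed z) :=
  hinv.debt_spec z hs.debt_eq

/-- The junction is never the first vertex `q` of `b q`: it would make `z = q`, and then `q`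
would be claimed, so that the part of `b q` in use starts after `q`. -/
theorem one_le (H : AugSetting E X Y X' W x a b) (hinv : Inv a b X' x σ)
    (hs : IsSteal a b X' σ z i j q d) : 1 ≤ j := by
  obtain ⟨-, hzm, -, hzc⟩ := hs.debtor_spec hinv
  by_contra hj0
  obtain rfl : j = 0 := by omega
  have hbq : (b q).verts[0]'hs.lt_b = q := H.b_start q hs.mem
  have hz0 : (a z).verts[i]'hs.lt_a ∈ X := by rw [hs.getElem_eq, hbq]; exact H.subset hs.mem
  have hi0 := (a z).eq_zero_of_getElem_mem H.noIn hs.lt_a hz0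
  subst hi0
  have hzq : z = q := by
    rw [← H.a_start z (H.insert_subset hzm), ← hbq]; exact hs.getElem_eq
  subst hzq
  obtain rfl | ⟨w, i₀, j₀, hw⟩ := hzc
  · exact H.notMem hs.mem
  · obtain ⟨-, -, -, -, hj₀, -, hcut, -⟩ := hinv.own_spec w i₀ j₀ z hw
    have := hs.cut_le
    omega

theorem eq_next_of_own (hinv : Inv a b X' x σ) (hs : IsSteal a b X' σ z i j q d) {w : V}
    {i₀ j₀ : ℕ} (hw : σ.own w = some (i₀, j₀, q)) : w = d := by
  obtain ⟨i₁, j₁, hd⟩ | ⟨hnc, -⟩ := hs.next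
  · exact hinv.own_inj _ _ _ _ _ _ _ hw hd
  · exact absurd ⟨w, i₀, j₀, hw⟩ hnc

theorem next_ne (H : AugSetting E X Y X' W x a b) (hinv : Inv a b X' x σ)
    (hs : IsSteal a b X' σ z i j q d) : d ≠ z := by
  obtain ⟨hz, -, -, hzc⟩ := hs.debtor_spec hinv
  rintro rfl
  obtain ⟨i₁, j₁, hd⟩ | ⟨hnc, rfl⟩ := hs.next
  · simp [hz] at hd
  · obtain rfl | hc := hzc
    · exact H.notMem hs.mem
    · exact hnc hc

theorem own_steal_eq_some (H : AugSetting E X Y X' W x a b) (hinv : Inv a b X' x σ)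
    (hs : IsSteal a b X' σ z i j q d) {w : V} (hw : w ≠ z) {i' j' : ℕ} {q' : V} :
    (σ.steal z i j q d).own w = some (i', j', q') ↔
      σ.own w = some (i', j', q') ∧ q' ≠ q := by
  rcases eq_or_ne w d with rfl | hwd
  · simp only [steal_own_next hw, reduceCtorEq, false_iff]
    rintro ⟨hown, hq'⟩
    obtain ⟨i₁, j₁, hd⟩ | ⟨hnc, rfl⟩ := hs.next
    · simp_all
    · simp [hinv.own_eq_none_of_not_claimed H hs.mem hnc] at hown
  · rw [steal_own_of_ne hw hwd, iff_self_and]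
    rintro hown rfl
    exact hwd (hs.eq_next_of_own hinv hown)

theorem own_steal_of_own (H : AugSetting E X Y X' W x a b) (hinv : Inv a b X' x σ)
    (hs : IsSteal a b X' σ z i j q d) {w : V} {i' j' : ℕ} {q' : V}
    (hw : σ.own w = some (i', j', q')) (hq' : q' ≠ q) :
    (σ.steal z i j q d).own w = some (i', j', q') := by
  have hwz : w ≠ z := by rintro rfl; simp [(hs.debtor_spec hinv).1] at hw
  exact (hs.own_steal_eq_some H hinv hwz).mpr ⟨hw, hq'⟩

theorem claimed_steal (H : AugSetting E X Y X' W x a b) (hinv : Inv a b X' x σ)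
    (hs : IsSteal a b X' σ z i j q d) {q' : V} (hc : σ.Claimed q') :
    (σ.steal z i j q d).Claimed q' := by
  rcases eq_or_ne q' q with rfl | hq'
  · exact ⟨z, i, j, steal_own_self⟩
  · obtain ⟨w, i', j', hw⟩ := hc
    exact ⟨w, i', j', hs.own_steal_of_own H hinv hw hq'⟩

/-- The previous junction of `d` on `b q` lies strictly before the new one, since the two
junctions lie on the disjoint paths `a d` and `a z`. -/
theorem own_next_lt (H : AugSetting E X Y X' W x a b) (hinv : Inv a b X' x σ)
    (hs : IsSteal a b X' σ z i j q d) {i₀ j₀ : ℕ} (hd : σ.own d = some (i₀, j₀, q)) :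
    j₀ < j := by
  obtain ⟨-, hdm, hi₀, hj₀, -, hij₀, hcut, -⟩ := hinv.own_spec d i₀ j₀ q hd
  have hle := hs.cut_le
  refine lt_of_le_of_ne (hcut ▸ hle) fun hjj => ?_
  subst hjj
  have hzm := (hs.debtor_spec hinv).2.1
  exact H.a_disjoint (H.insert_subset hdm) (H.insert_subset hzm) (hs.next_ne H hinv)
    (hij₀ ▸ List.getElem_mem _) (hs.getElem_eq ▸ List.getElem_mem _)

theorem own_spec (H : AugSetting E X Y X' W x a b) (hinv : Inv a b X' x σ)
    (hs : IsSteal a b X' σ z i j q d) {w : V} {i' j' : ℕ} {q' : V}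
    (hw : (σ.steal z i j q d).own w = some (i', j', q')) :
    q' ∈ X' ∧ w ∈ insert x X' ∧
      ∃ (hi : i' < (a w).verts.length) (hj : j' < (b q').verts.length),
        1 ≤ j' ∧ (a w).verts[i'] = (b q').verts[j'] ∧ (σ.steal z i j q d).cut q' = j' ∧
          (σ.steal z i j q d).ptr w = i' + 1 := by
  rcases eq_or_ne w z with rfl | hwz
  · obtain ⟨rfl, rfl, rfl⟩ : i = i' ∧ j = j' ∧ q = q' := by simpa using hw
    exact ⟨hs.mem, (hs.debtor_spec hinv).2.1, hs.lt_a, hs.lt_b, hs.one_le H hinv,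
      hs.getElem_eq, steal_cut_self, steal_ptr_self⟩
  · obtain ⟨hw, hq'⟩ := (hs.own_steal_eq_some H hinv hwz).mp hw
    obtain ⟨h1, h2, hi, hj, h3, h4, h5, h6⟩ := hinv.own_spec w i' j' q' hw
    exact ⟨h1, h2, hi, hj, h3, h4, by rwa [steal_cut_of_ne hq'], by rwa [steal_ptr_of_ne hwz]⟩

theorem own_inj (H : AugSetting E X Y X' W x a b) (hinv : Inv a b X' x σ)
    (hs : IsSteal a b X' σ z i j q d) {w w' : V} {i₁ j₁ i₂ j₂ : ℕ} {q' : V}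
    (hw : (σ.steal z i j q d).own w = some (i₁, j₁, q'))
    (hw' : (σ.steal z i j q d).own w' = some (i₂, j₂, q')) : w = w' := by
  have key : ∀ {u i₁ j₁}, u ≠ z → (σ.steal z i j q d).own u = some (i₁, j₁, q') →
      σ.own u = some (i₁, j₁, q') ∧ q' ≠ q :=
    fun hu h => (hs.own_steal_eq_some H hinv hu).mp h
  rcases eq_or_ne w z with rfl | hwz
  · rcases eq_or_ne w' w with rfl | hw'w
    · rfl
    · simp only [steal_own_self, Option.some.injEq, Prod.mk.injEq] at hw
      exact absurd hw.2.2.symm (key hw'w hw').2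
  · rcases eq_or_ne w' z with rfl | hw'z
    · simp only [steal_own_self, Option.some.injEq, Prod.mk.injEq] at hw'
      exact absurd hw'.2.2.symm (key hwz hw).2
    · exact hinv.own_inj _ _ _ _ _ _ _ (key hwz hw).1 (key hw'z hw').1

theorem cut_eq_zero (H : AugSetting E X Y X' W x a b) (hinv : Inv a b X' x σ)
    (hs : IsSteal a b X' σ z i j q d) {q' : V} (hnc : ¬ (σ.steal z i j q d).Claimed q') :
    (σ.steal z i j q d).cut q' = 0 := by
  have hq' : q' ≠ q := by rintro rfl; exact hnc ⟨z, i, j, steal_own_self⟩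
  rw [steal_cut_of_ne hq']
  exact hinv.cut_eq_zero q' fun hc => hnc (hs.claimed_steal H hinv hc)

theorem liveSet_subset (hs : IsSteal a b X' σ z i j q d) :
    (σ.steal z i j q d).liveSet b X' ⊆ σ.liveSet b X' := by
  rintro v ⟨q', hq', k, hk, hc, rfl⟩
  refine mem_liveSet hq' hk (le_trans ?_ hc)
  rcases eq_or_ne q' q with rfl | hne
  · simpa using hs.cut_le
  · rw [steal_cut_of_ne hne]

theorem own_clean (H : AugSetting E X Y X' W x a b) (hinv : Inv a b X' x σ)
    (hs : IsSteal a b X' σ z i j q d) {w : V} {i' j' : ℕ} {q' : V}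
    (hw : (σ.steal z i j q d).own w = some (i', j', q')) {k : ℕ} (hk : k < i')
    (hk' : k < (a w).verts.length) : (a w).verts[k] ∉ (σ.steal z i j q d).liveSet b X' := by
  refine fun hmem => ?_
  rcases eq_or_ne w z with rfl | hwz
  · obtain ⟨rfl, -⟩ : i = i' ∧ _ := by simpa using hw
    exact hs.not_live_of_lt k hk hk' (hs.liveSet_subset hmem)
  · exact hinv.own_clean w i' j' q' ((hs.own_steal_eq_some H hinv hwz).mp hw).1 k hk hk'
      (hs.liveSet_subset hmem)

/-- A vertex losing its route keeps its pointer: its old junction on `b q` now lies before the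
cut of `b q`, so the scanned part of its `a`-path stays out of the live set. -/
theorem ptr_clean (H : AugSetting E X Y X' W x a b) (hinv : Inv a b X' x σ)
    (hs : IsSteal a b X' σ z i j q d) {w : V} (hw : (σ.steal z i j q d).own w = none) {k : ℕ}
    (hk : k < (σ.steal z i j q d).ptr w) (hk' : k < (a w).verts.length) :
    (a w).verts[k] ∉ (σ.steal z i j q d).liveSet b X' := by
  have hwz : w ≠ z := by rintro rfl; simp at hw
  rw [steal_ptr_of_ne hwz] at hk
  cases hown : σ.own w with
  | none => exact fun hmem => hinv.ptr_clean w hown k hk hk' (hs.liveSet_subset hmem)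
  | some t =>
    obtain ⟨i₀, j₀, q₀⟩ := t
    obtain rfl : q₀ = q := by
      by_contra hne
      simp [hs.own_steal_of_own H hinv hown hne] at hw
    obtain rfl := hs.eq_next_of_own hinv hown
    obtain ⟨-, -, _, hj₀, -, hij₀, -, hptr⟩ := hinv.own_spec _ _ _ _ hown
    rcases Nat.lt_or_ge k i₀ with hlt | hge
    · exact fun hmem => hinv.own_clean _ _ _ _ hown k hlt hk' (hs.liveSet_subset hmem)
    · obtain rfl : k = i₀ := by omega
      rw [hij₀]
      exact getElem_notMem_liveSet H.b_disjoint hs.mem hj₀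
        (by rw [steal_cut_self]; exact hs.own_next_lt H hinv hown)

theorem ptr_le (hinv : Inv a b X' x σ)
    (hs : IsSteal a b X' σ z i j q d) : σ.ptr z ≤ i := by
  by_contra hlt
  exact hinv.ptr_clean z (hinv.debt_spec z hs.debt_eq).1 i (by omega) hs.lt_a
    (hs.getElem_eq ▸ mem_liveSet hs.mem hs.lt_b hs.cut_le)

theorem next_spec (H : AugSetting E X Y X' W x a b) (hinv : Inv a b X' x σ)
    (hs : IsSteal a b X' σ z i j q d) :
    (σ.steal z i j q d).own d = none ∧ d ∈ insert x X' ∧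
      (d = x ∨ (σ.steal z i j q d).Claimed d) := by
  refine ⟨steal_own_next (hs.next_ne H hinv), ?_⟩
  obtain ⟨i₀, j₀, hd⟩ | ⟨-, rfl⟩ := hs.next
  · refine ⟨(hinv.own_spec d i₀ j₀ q hd).2.1, ?_⟩
    exact (hinv.active d (by simp [hd])).imp_right (hs.claimed_steal H hinv)
  · exact ⟨Or.inr hs.mem, Or.inr ⟨z, i, j, steal_own_self⟩⟩

theorem active (H : AugSetting E X Y X' W x a b) (hinv : Inv a b X' x σ)
    (hs : IsSteal a b X' σ z i j q d) {w : V} (hw : (σ.steal z i j q d).own w ≠ none) :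
    w = x ∨ (σ.steal z i j q d).Claimed w := by
  refine Or.imp_right (hs.claimed_steal H hinv) ?_
  rcases eq_or_ne w z with rfl | hwz
  · exact (hs.debtor_spec hinv).2.2.2
  · obtain ⟨⟨i', j', q'⟩, ht⟩ := Option.ne_none_iff_exists'.mp hw
    exact hinv.active w (by simp [((hs.own_steal_eq_some H hinv hwz).mp ht).1])

theorem cover (H : AugSetting E X Y X' W x a b) (hinv : Inv a b X' x σ)
    (hs : IsSteal a b X' σ z i j q d) {w : V} (hw : w ∈ insert x X') :
    (σ.steal z i j q d).own w ≠ none ∨ (σ.steal z i j q d).debt = some w ∨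
      (w ∈ X' ∧ ¬ (σ.steal z i j q d).Claimed w) := by
  rcases eq_or_ne w z with rfl | hwz
  · simp
  rcases eq_or_ne w d with rfl | hwd
  · simp
  obtain ⟨-, -, hexh, -⟩ := hs.debtor_spec hinv
  rcases hinv.cover w hw with hown | hexh' | hdebt | ⟨hwX', hnc⟩
  · left
    rwa [steal_own_of_ne hwz hwd]
  · simp [hexh] at hexh'
  · simp [hs.debt_eq, Ne.symm hwz] at hdebt
  · refine Or.inr (Or.inr ⟨hwX', ?_⟩)
    rintro ⟨u, i', j', hu⟩
    rcases eq_or_ne u z with rfl | huz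
    · obtain rfl : q = w := (by simpa using hu : _ ∧ _ ∧ q = w).2.2
      obtain ⟨i₀, j₀, hd⟩ | ⟨-, rfl⟩ := hs.next
      · exact hnc ⟨d, i₀, j₀, hd⟩
      · exact hwd rfl
    · exact hnc ⟨u, i', j', ((hs.own_steal_eq_some H hinv huz).mp hu).1⟩

theorem inv (H : AugSetting E X Y X' W x a b) (hinv : Inv a b X' x σ)
    (hs : IsSteal a b X' σ z i j q d) : Inv a b X' x (σ.steal z i j q d) where
  own_spec _ _ _ _ hw := hs.own_spec H hinv hw
  own_inj _ _ _ _ _ _ _ hw hw' := hs.own_inj H hinv hw hw'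
  cut_eq_zero _ hnc := hs.cut_eq_zero H hinv hnc
  own_clean _ _ _ _ hw _ hk hk' := hs.own_clean H hinv hw hk hk'
  ptr_clean _ hw _ hk hk' := hs.ptr_clean H hinv hw hk hk'
  debt_spec w hw := by
    obtain rfl : d = w := by simpa using hw
    obtain ⟨h1, h2, h3⟩ := hs.next_spec H hinv
    exact ⟨h1, h2, rfl, h3⟩
  exh_spec w hw := by simp at hw
  active _ hw := hs.active H hinv hw
  cover _ hw := (hs.cover H hinv hw).imp_right Or.inr
  ptr_le w := by
    rcases eq_or_ne w z with rfl | hwz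
    · simpa using hs.lt_a
    · simpa [steal_ptr_of_ne hwz] using hinv.ptr_le w

end IsSteal

theorem Step.inv (H : AugSetting E X Y X' W x a b) (hinv : Inv a b X' x σ) {σ' : AugState V}
    (hst : Step a b X' σ σ') : Inv a b X' x σ' := by
  cases hst with
  | idle => exact hinv
  | steal z i j q d hs => exact hs.inv H hinv
  | finish z hz hclean =>
    obtain ⟨hoz, hzm, hexh, hzc⟩ := hinv.debt_spec z hz
    refine { hinv with debt_spec := ?_, exh_spec := ?_, cover := ?_ }
    · simp
    · intro z' h'
      obtain rfl : z = z' := by simpa using h'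
      exact ⟨rfl, hoz, hzm, hclean, hzc⟩
    · intro w hw
      rcases hinv.cover w hw with h | h | h | h
      · exact Or.inl h
      · simp [hexh] at h
      · obtain rfl : z = w := by simpa [hz] using h
        simp
      · exact Or.inr (Or.inr (Or.inr h))

theorem Step.ptr_le (hinv : Inv a b X' x σ) (hst : Step a b X' σ σ') (w : V) :
    σ.ptr w ≤ σ'.ptr w := by
  cases hst with
  | idle | finish => exact le_rfl
  | steal z i j q d hs =>
    rcases eq_or_ne w z with rfl | hwz
    · simpa using (hs.ptr_le hinv).trans (Nat.le_succ i)
    · rw [steal_ptr_of_ne hwz]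

theorem Step.ptr_lt (hinv : Inv a b X' x σ) (hst : Step a b X' σ σ') {z : V}
    (hz : σ.debt = some z) (hz' : σ'.debt ≠ none) : σ.ptr z < σ'.ptr z := by
  cases hst with
  | idle h => simp [hz] at h
  | finish => simp at hz'
  | steal z' i j q d hs =>
    obtain rfl : z = z' := by simpa [hz] using hs.debt_eq
    simpa [Nat.lt_succ_iff] using hs.ptr_le hinv

theorem Step.debt_of_own_ne (hst : Step a b X' σ σ') {w : V} (hw : σ'.own w ≠ σ.own w) :
    σ.debt = some w ∨ σ'.debt = some w := by
  cases hst with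
  | idle | finish => exact absurd rfl hw
  | steal z i j q d hs =>
    rcases eq_or_ne w z with rfl | hwz
    · exact Or.inl hs.debt_eq
    rcases eq_or_ne w d with rfl | hwd
    · exact Or.inr rfl
    · exact absurd (steal_own_of_ne hwz hwd) hw

theorem exists_step (σ : AugState V) : ∃ σ', Step a b X' σ σ' := by
  classical
  cases hdebt : σ.debt with
  | none => exact ⟨σ, .idle σ hdebt⟩
  | some z =>
    by_cases hh : ∃ k, ∃ _ : k < (a z).verts.length, (a z).verts[k] ∈ σ.liveSet b X'
    · obtain ⟨hi, q, hq, j, hj, hcut, heq⟩ := Nat.find_spec hh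
      have hmin : ∀ k < Nat.find hh, ∀ _ : k < (a z).verts.length,
          (a z).verts[k] ∉ σ.liveSet b X' := fun k hk h hm => Nat.find_min hh hk ⟨h, hm⟩
      by_cases hc : σ.Claimed q
      · obtain ⟨d, i₀, j₀, hd⟩ := hc
        exact ⟨_, .steal σ z _ j q d
          ⟨hdebt, hi, hq, hj, hcut, heq.symm, hmin, Or.inl ⟨i₀, j₀, hd⟩⟩⟩
      · exact ⟨_, .steal σ z _ j q q
          ⟨hdebt, hi, hq, hj, hcut, heq.symm, hmin, Or.inr ⟨hc, rfl⟩⟩⟩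
    · push Not at hh
      exact ⟨_, .finish σ z hdebt hh⟩

theorem exists_run (H : AugSetting E X Y X' W x a b) :
    ∃ r : ℕ → AugState V, (∀ m, Inv a b X' x (r m)) ∧
      ∀ m, Step a b X' (r m) (r (m + 1)) := by
  choose next hnext using exists_step (a := a) (b := b) (X' := X')
  refine ⟨fun m => next^[m] (init x), fun m => ?_, fun m => ?_⟩
  · induction m with
    | zero => exact inv_init
    | succ m ih =>
      simp only [Function.iterate_succ_apply'] at ih ⊢
      exact (hnext _).inv H ih
  · simp only [Function.iterate_succ_apply']
    exact hnext _

/-- Along a run that never stops, every vertex is in debt only finitely often, as each time its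
pointer strictly increases; hence its route eventually stops changing. -/
theorem exists_own_stable {r : ℕ → AugState V} (hrI : ∀ m, Inv a b X' x (r m))
    (hrS : ∀ m, Step a b X' (r m) (r (m + 1))) (hrun : ∀ m, (r m).debt ≠ none) (z : V) :
    ∃ N, ∀ m, N ≤ m → (r m).own z = (r N).own z ∧ (r m).debt ≠ some z := by
  obtain ⟨N, hN⟩ := Monotone.exists_forall_ge_eq_of_le
    (monotone_nat_of_le_succ fun m => (hrS m).ptr_le (hrI m) z) fun m => (hrI m).ptr_le z
  have hdebt : ∀ m, N ≤ m → (r m).debt ≠ some z := fun m hm hz => by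
    have := (hrS m).ptr_lt (hrI m) hz (hrun (m + 1))
    rw [hN m hm, hN (m + 1) (by omega)] at this
    exact lt_irrefl _ this
  refine ⟨N, fun m hm => ⟨?_, hdebt m hm⟩⟩
  induction m, hm using Nat.le_induction with
  | base => rfl
  | succ m hm ih =>
    by_contra hne
    rcases (hrS m).debt_of_own_ne (fun h => hne (h.trans ih)) with h | h
    · exact hdebt m hm h
    · exact hdebt (m + 1) (by omega) h

namespace Inv

theorem take_disjoint_drop (hinv : Inv a b X' x σ) {z q : V} {i j : ℕ}
    (hown : σ.own z = some (i, j, q)) :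
    ((a z).verts.take (i + 1)).Disjoint ((b q).verts.drop (j + 1)) := by
  obtain ⟨hq, -, hi, hj, -, hij, hcut, -⟩ := hinv.own_spec z i j q hown
  intro v hvt hvd
  obtain ⟨k, hk, rfl⟩ := List.mem_take_iff_getElem.mp hvt
  obtain ⟨t, ht, htv⟩ := List.mem_drop_iff_getElem.mp hvd
  rcases Nat.lt_or_ge k i with hlt | hge
  · have hlive : (b q).verts[j + 1 + t] ∈ σ.liveSet b X' := mem_liveSet hq _ (by omega)
    rw [htv] at hlive
    exact hinv.own_clean z i j q hown k hlt _ hlive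
  · obtain rfl : k = i := by omega
    have := (b q).nodup.getElem_inj_iff.mp (hij.symm.trans htv.symm)
    omega

theorem route_eq_splice (hinv : Inv a b X' x σ) {z q : V} {i j : ℕ}
    (hown : σ.own z = some (i, j, q)) :
    (σ.route a b z).verts = (a z).verts.take (i + 1) ++ (b q).verts.drop (j + 1) ∧
      (σ.route a b z).last = (b q).last ∧ (σ.route a b z).start = (a z).start := by
  obtain ⟨-, -, hi, hj, -, hij, -, -⟩ := hinv.own_spec z i j q hown
  have hdisj := hinv.take_disjoint_drop hown
  simp only [route, hown]
  exact ⟨Dipath.verts_splice hi hj hij hdisj, Dipath.splice_last hi hj hij hdisj,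
    Dipath.splice_start _ _ _ _⟩

theorem settled (H : AugSetting E X Y X' W x a b) (hinv : Inv a b X' x σ) {z : V}
    (hz : z ∈ insert x X') (hzd : σ.debt ≠ some z) :
    (∃ i j q, σ.own z = some (i, j, q)) ∨ (σ.exh = some z ∧ σ.own z = none) ∨
      (z ∈ X' ∧ ¬ σ.Claimed z ∧ σ.own z = none ∧ σ.exh ≠ some z) := by
  rcases hinv.cover z hz with hown | hexh | hdebt | ⟨hzX', hnc⟩
  · obtain ⟨⟨i, j, q⟩, h⟩ := Option.ne_none_iff_exists'.mp hown
    exact Or.inl ⟨i, j, q, h⟩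
  · exact Or.inr (Or.inl ⟨hexh, (hinv.exh_spec z hexh).2.1⟩)
  · exact absurd hdebt hzd
  · refine Or.inr (Or.inr
      ⟨hzX', hnc, hinv.own_eq_none_of_not_claimed H hzX' hnc, fun hexh => ?_⟩)
    obtain rfl | hc := (hinv.exh_spec z hexh).2.2.2.2
    · exact H.notMem hzX'
    · exact hnc hc

theorem mem_route (H : AugSetting E X Y X' W x a b) (hinv : Inv a b X' x σ) {z : V}
    (hz : z ∈ insert x X') (hzd : σ.debt ≠ some z) {v : V}
    (hv : v ∈ (σ.route a b z).verts) :
    (v ∈ (a z).verts ∧ v ∉ σ.liveSet b X') ∨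
      (σ.exh ≠ some z ∧ σ.partner z ∈ X' ∧ v ∈ (b (σ.partner z)).verts ∧
        v ∈ σ.liveSet b X') := by
  rcases hinv.settled H hz hzd with
    ⟨i, j, q, hown⟩ | ⟨hexh, hown⟩ | ⟨hzX', hnc, hown, hexh⟩
  · obtain ⟨hq, -, hi, hj, -, hij, hcut, -⟩ := hinv.own_spec z i j q hown
    have hex : σ.exh ≠ some z := fun h => by simp [(hinv.exh_spec z h).2.1] at hown
    have hpartner : σ.partner z = q := by simp [partner, hown]
    rw [(hinv.route_eq_splice hown).1, List.mem_append] at hv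
    rw [hpartner]
    rcases hv with hvt | hvd
    · obtain ⟨k, hk, rfl⟩ := List.mem_take_iff_getElem.mp hvt
      rcases Nat.lt_or_ge k i with hlt | hge
      · exact Or.inl ⟨List.getElem_mem _, hinv.own_clean z i j q hown k hlt _⟩
      · obtain rfl : k = i := by omega
        rw [hij]
        exact Or.inr ⟨hex, hq, List.getElem_mem _, mem_liveSet hq hj hcut.le⟩
    · obtain ⟨t, ht, rfl⟩ := List.mem_drop_iff_getElem.mp hvd
      exact Or.inr ⟨hex, hq, List.getElem_mem _, mem_liveSet hq (by omega) (by omega)⟩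
  · simp only [route, hown, hexh, if_true] at hv
    obtain ⟨k, hk, rfl⟩ := List.mem_iff_getElem.mp hv
    exact Or.inl ⟨List.getElem_mem _, (hinv.exh_spec z hexh).2.2.2.1 k hk⟩
  · simp only [route, hown, hexh, if_false] at hv
    have hpartner : σ.partner z = z := by simp [partner, hown]
    obtain ⟨k, hk, rfl⟩ := List.mem_iff_getElem.mp hv
    rw [hpartner]
    exact Or.inr ⟨hexh, hzX', List.getElem_mem _,
      mem_liveSet hzX' hk (by rw [hinv.cut_eq_zero z hnc]; omega)⟩

theorem partner_ne (H : AugSetting E X Y X' W x a b) (hinv : Inv a b X' x σ) {z z' : V}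
    (hz : z ∈ insert x X') (hz' : z' ∈ insert x X') (hzd : σ.debt ≠ some z)
    (hzd' : σ.debt ≠ some z') (hex : σ.exh ≠ some z) (hex' : σ.exh ≠ some z')
    (hne : z ≠ z') :
    σ.partner z ≠ σ.partner z' := by
  rcases hinv.settled H hz hzd with ⟨i, j, q, hown⟩ | ⟨hexh, -⟩ | ⟨-, hnc, hown, -⟩ <;>
    rcases hinv.settled H hz' hzd' with
      ⟨i', j', q', hown'⟩ | ⟨hexh', -⟩ | ⟨-, hnc', hown', -⟩
  all_goals first
    | exact absurd hexh hex
    | exact absurd hexh' hex'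
    | simp only [partner, hown, hown']
  · exact fun hq => hne (hinv.own_inj z z' i j i' j' q (by rw [hown]) (by rw [hown', hq]))
  · exact fun hq => hnc' ⟨z, i, j, hq ▸ hown⟩
  · exact fun hq => hnc ⟨z', i', j', hq ▸ hown'⟩
  · exact hne

theorem route_disjoint (H : AugSetting E X Y X' W x a b) (hinv : Inv a b X' x σ) {z z' : V}
    (hz : z ∈ insert x X') (hz' : z' ∈ insert x X') (hzd : σ.debt ≠ some z)
    (hzd' : σ.debt ≠ some z') (hne : z ≠ z') :
    (σ.route a b z).verts.Disjoint (σ.route a b z').verts := by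
  intro v hv hv'
  rcases hinv.mem_route H hz hzd hv with ⟨ha, hnl⟩ | ⟨hex, hp, hb, hl⟩ <;>
    rcases hinv.mem_route H hz' hzd' hv' with ⟨ha', hnl'⟩ | ⟨hex', hp', hb', hl'⟩
  · exact H.a_disjoint (H.insert_subset hz) (H.insert_subset hz') hne ha ha'
  · exact hnl hl'
  · exact hnl' hl
  · exact H.b_disjoint hp hp' (hinv.partner_ne H hz hz' hzd hzd' hex hex' hne) hb hb'

theorem route_start (H : AugSetting E X Y X' W x a b) (hinv : Inv a b X' x σ) {z : V}
    (hz : z ∈ insert x X') (hzd : σ.debt ≠ some z) : (σ.route a b z).start = z := by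
  rcases hinv.settled H hz hzd with
    ⟨i, j, q, hown⟩ | ⟨hexh, hown⟩ | ⟨hzX', -, hown, hexh⟩
  · rw [(hinv.route_eq_splice hown).2.2, H.a_start z (H.insert_subset hz)]
  · simpa [route, hown, hexh] using H.a_start z (H.insert_subset hz)
  · simpa [route, hown, hexh] using H.b_start z hzX'

theorem route_last (H : AugSetting E X Y X' W x a b) (hinv : Inv a b X' x σ) {z : V}
    (hz : z ∈ insert x X') (hzd : σ.debt ≠ some z) :
    (σ.route a b z).last ∈ W ∨ (σ.exh = some z ∧ (σ.route a b z).last = (a z).last) := by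
  rcases hinv.settled H hz hzd with
    ⟨i, j, q, hown⟩ | ⟨hexh, hown⟩ | ⟨hzX', -, hown, hexh⟩
  · rw [(hinv.route_eq_splice hown).2.1]
    exact Or.inl (H.b_last q (hinv.own_spec z i j q hown).1)
  · exact Or.inr ⟨hexh, by simp [route, hown, hexh]⟩
  · left
    simpa [route, hown, hexh] using H.b_last z hzX'

end Inv

theorem route_congr {τ : AugState V} {z : V} (hown : σ.own z = τ.own z)
    (hexh : σ.exh = τ.exh) :
    σ.route a b z = τ.route a b z := by
  unfold route
  rw [hown, hexh]

theorem Inv.exists_joinable_of_debt_eq_none (H : AugSetting E X Y X' W x a b)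
    (hinv : Inv a b X' x σ) (hdebt : σ.debt = none) :
    ∃ y ∈ Y, Joinable E (insert x X') (insert y W) := by
  have hzd : ∀ z, σ.debt ≠ some z := by simp [hdebt]
  obtain ⟨y, hyY, hy⟩ : ∃ y ∈ Y, ∀ z, σ.exh = some z → (a z).last = y := by
    cases hexh : σ.exh with
    | none => exact ⟨(a x).last, H.a_last x H.mem, by simp⟩
    | some z =>
      refine ⟨(a z).last, H.a_last z (H.insert_subset (hinv.exh_spec z hexh).2.2.1), ?_⟩
      rintro _ ⟨⟩
      rfl
  refine ⟨y, hyY, joinable_of_linkage H.noIn H.noOut H.insert_subset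
    (Set.insert_subset hyY H.target_subset) (σ.route a b)
    (fun z hz => hinv.route_start H hz (hzd z))
    (fun z hz => ?_) (fun z hz z' hz' hne => hinv.route_disjoint H hz hz' (hzd z) (hzd z') hne)⟩
  rcases hinv.route_last H hz (hzd z) with h | ⟨hexh, h⟩
  · exact Or.inr h
  · exact Or.inl (h.trans (hy z hexh))

theorem exists_joinable_of_forall_debt_ne_none (H : AugSetting E X Y X' W x a b)
    {r : ℕ → AugState V} (hrI : ∀ m, Inv a b X' x (r m))
    (hrS : ∀ m, Step a b X' (r m) (r (m + 1)))
    (hrun : ∀ m, (r m).debt ≠ none) : ∃ y ∈ Y, Joinable E (insert x X') (insert y W) := by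
  have hexh : ∀ m, (r m).exh = none := fun m =>
    Option.eq_none_iff_forall_ne_some.mpr fun z h => hrun m ((hrI m).exh_spec z h).1
  choose N hN using exists_own_stable hrI hrS hrun
  have hroute : ∀ z m, N z ≤ m → (r m).route a b z = (r (N z)).route a b z := fun z m hm =>
    route_congr (hN z m hm).1 ((hexh m).trans (hexh (N z)).symm)
  refine ⟨(a x).last, H.a_last x H.mem, joinable_of_linkage H.noIn H.noOut H.insert_subset
    (Set.insert_subset (H.a_last x H.mem) H.target_subset) (fun z => (r (N z)).route a b z)
    (fun z hz => (hrI (N z)).route_start H hz (hN z (N z) le_rfl).2) (fun z hz => ?_) ?_⟩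
  · rcases (hrI (N z)).route_last H hz (hN z (N z) le_rfl).2 with h | ⟨h, -⟩
    · exact Or.inr h
    · simp [hexh] at h
  · intro z hz z' hz' hne
    have hm := le_max_left (N z) (N z')
    have hm' := le_max_right (N z) (N z')
    simp only [← hroute z _ hm, ← hroute z' _ hm']
    exact (hrI _).route_disjoint H hz hz' (hN z _ hm).2 (hN z' _ hm').2 hne

end AugState

theorem AugSetting.exists_joinable {E : Set (V × V)} {X Y X' W : Set V} {x : V}
    {a b : V → Dipath E} (H : AugSetting E X Y X' W x a b) :
    ∃ y ∈ Y, Joinable E (insert x X') (insert y W) := by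
  obtain ⟨r, hrI, hrS⟩ := AugState.exists_run H
  by_cases hhalt : ∃ m, (r m).debt = none
  · obtain ⟨m, hm⟩ := hhalt
    exact (hrI m).exists_joinable_of_debt_eq_none H hm
  · push Not at hhalt
    exact AugState.exists_joinable_of_forall_debt_ne_none H hrI hrS hhalt

theorem Joinable.exists_insert {E : Set (V × V)} {X Y X' W : Set V} {x : V}
    (hXY : Joinable E X Y) (hX : ∀ e ∈ E, e.2 ∉ X) (hY : ∀ e ∈ E, e.1 ∉ Y)
    (hX'X : X' ⊆ X) (hWY : W ⊆ Y) (hx : x ∈ X) (hx' : x ∉ X') (hjoin : Joinable E X' W) :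
    ∃ y ∈ Y, Joinable E (insert x X') (insert y W) := by
  obtain ⟨a, ha₁, ha₂, ha₃⟩ := hXY.exists_linkage
  obtain ⟨b, hb₁, hb₂, hb₃⟩ := hjoin.exists_linkage
  exact AugSetting.exists_joinable
    ⟨hX, hY, hX'X, hWY, hx, hx', ha₁, ha₂, ha₃, hb₁, hb₂, hb₃⟩

theorem Joinable.exists_insert_sdiff_ncard_le {E : Set (V × V)} {X Y X₁ Y₁ Y' : Set V} {x : V}
    (hXY : Joinable E X Y) (hX : ∀ e ∈ E, e.2 ∉ X) (hY : ∀ e ∈ E, e.1 ∉ Y)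
    (hX₁ : X₁ ⊆ X) (hY₁ : Y₁ ⊆ Y) (hx : x ∈ X) (hx₁ : x ∉ X₁) (hfin : (Y₁ \ Y').Finite)
    (hjoin : Joinable E X₁ Y₁) :
    ∃ Y₂ ⊆ Y, Joinable E (insert x X₁) Y₂ ∧ (Y₂ \ Y').Finite ∧
      (Y₂ \ Y').ncard ≤ (Y₁ \ Y').ncard + 1 := by
  obtain ⟨y, hy, hj⟩ := hXY.exists_insert hX hY hX₁ hY₁ hx hx₁ hjoin
  have hsub : insert y Y₁ \ Y' ⊆ insert y (Y₁ \ Y') := by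
    rintro v ⟨rfl | hv, hvY'⟩
    exacts [Set.mem_insert _ _, Set.mem_insert_of_mem _ ⟨hv, hvY'⟩]
  exact ⟨insert y Y₁, Set.insert_subset hy hY₁, hj, (hfin.insert y).subset hsub,
    (Set.ncard_le_ncard hsub (hfin.insert y)).trans (Set.ncard_insert_le _ _)⟩

/-- If `X` is joinable to `Y` and `X' ⊆ X` (with `X \ X'` finite) is joinable to
`Y' ⊆ Y`, then `X` is joinable to some `Y'' ⊆ Y` with `|Y'' \ Y'| ≤ |X \ X'|`. -/
theorem stmt5 {V : Type u} (E : Set (V × V)) (X Y : Set V)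
    (hX : ∀ e ∈ E, e.2 ∉ X) (hY : ∀ e ∈ E, e.1 ∉ Y)
    (hXY : Joinable E X Y) (X' Y' : Set V) (hX' : X' ⊆ X) (hY' : Y' ⊆ Y)
    (hfin : (X \ X').Finite) (hjoin : Joinable E X' Y') :
    ∃ Y'' ⊆ Y, Joinable E X Y'' ∧ (Y'' \ Y').Finite ∧
      (Y'' \ Y').ncard ≤ (X \ X').ncard := by
  have key : ∃ Y'' ⊆ Y, Joinable E (X' ∪ (X \ X')) Y'' ∧ (Y'' \ Y').Finite ∧
      (Y'' \ Y').ncard ≤ (X \ X').ncard := by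
    refine Set.Finite.induction_on_subset (motive := fun t _ => ∃ Y'' ⊆ Y,
      Joinable E (X' ∪ t) Y'' ∧ (Y'' \ Y').Finite ∧ (Y'' \ Y').ncard ≤ t.ncard) _ hfin
      ⟨Y', hY', by simpa using hjoin, by simp, by simp⟩ ?_
    rintro x t hx ht hxt ⟨Y'', hY''Y, hj, hfin', hcard⟩
    obtain ⟨Y₂, hY₂, hj₂, hfin₂, hcard₂⟩ := hXY.exists_insert_sdiff_ncard_le hX hY
      (Set.union_subset hX' (ht.trans Set.sdiff_subset)) hY''Y hx.1
      (by rintro (h | h); exacts [hx.2 h, hxt h]) hfin' hj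
    refine ⟨Y₂, hY₂, by rwa [Set.union_insert], hfin₂, ?_⟩
    rw [Set.ncard_insert_of_notMem hxt (hfin.subset ht)]
    omega
  rwa [Set.union_sdiff_cancel hX'] at key
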